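/- arXiv:0909.2539 — 2 statements merged into one kernel-verified Lean document; each statement's English description precedes it below -/
import Mathlib

section
/- Let $T : X \to X$ be a map on a set $X$ and let $(f_n)$ be a sequence of real-valued functions on $X$ with $f_{n+m} \leq f_n + f_m \circ T^n$ pointwise. Then for all positive integers $k$ and $n$ with $n \geq 2k$, we have the pointwise inequality $f_n \leq \frac{1}{k}\sum_{s=0}^{n-k} f_k \circ T^s + \frac{1}{k}\sum_{j=0}^{k-1}\big(f_{n-j-\lfloor (n-j)/k\rfloor k}\circ T^{\lfloor (n-j)/k\rfloor k + j} + f_j\big)$, where $f_0 := 0$. -/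
/-!
For each offset `j < k`, subadditivity splits `[0, n)` into `[0, j)`, the full blocks
`[i k + j, (i + 1) k + j)` and a remainder shorter than `k`. Summing these `k` bounds over `j`,
the full blocks of all offsets start at each `s ∈ [0, n - k]` exactly once.
-/

open Finset

theorem Finset.sum_range_sum_range_div_mul_add {M : Type*} [AddCommMonoid M] (g : ℕ → M)
    {k n : ℕ} (hk : 0 < k) (hkn : k ≤ n) :
    ∑ j ∈ range k, ∑ i ∈ range ((n - j) / k), g (i * k + j) = ∑ s ∈ range (n - k + 1), g s := by
  rw [sum_sigma']
  refine sum_nbij' (fun p ↦ p.2 * k + p.1) (fun s ↦ ⟨s % k, s / k⟩) ?_ ?_ ?_ ?_ fun _ _ ↦ rfl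
  · rintro ⟨j, i⟩ hp
    simp only [mem_sigma, mem_range] at hp ⊢
    have := (Nat.le_div_iff_mul_le hk).1 hp.2
    rw [Nat.succ_mul] at this
    omega
  · intro s hs
    simp only [mem_sigma, mem_range] at hs ⊢
    refine ⟨Nat.mod_lt s hk, (Nat.le_div_iff_mul_le hk).2 ?_⟩
    have := Nat.div_add_mod' s k
    rw [Nat.succ_mul]
    omega
  · rintro ⟨j, i⟩ hp
    simp only [mem_sigma, mem_range] at hp
    have hdiv : (i * k + j) / k = i := by
      rw [add_comm, Nat.add_mul_div_right _ _ hk, Nat.div_eq_of_lt hp.1, zero_add]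
    simp [Nat.add_mod, Nat.mod_eq_of_lt hp.1, hdiv]
  · intro s _
    exact Nat.div_add_mod' s k

section Subadditive

variable {X : Type*} {T : X → X} {f : ℕ → X → ℝ}

theorem le_add_comp_iterate_of_subadditive (h0 : ∀ x, f 0 x = 0)
    (hsub : ∀ m n : ℕ, 1 ≤ m → 1 ≤ n → ∀ x, f (m + n) x ≤ f m x + f n (T^[m] x))
    (m n : ℕ) (x : X) : f (m + n) x ≤ f m x + f n (T^[m] x) := by
  rcases Nat.eq_zero_or_pos m with rfl | hm
  · simp [h0]
  rcases Nat.eq_zero_or_pos n with rfl | hn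
  · simp [h0]
  exact hsub m n hm hn x

theorem le_sum_blocks_add (hsub : ∀ m n x, f (m + n) x ≤ f m x + f n (T^[m] x))
    (k q r : ℕ) (x : X) :
    f (q * k + r) x ≤ ∑ i ∈ range q, f k (T^[i * k] x) + f r (T^[q * k] x) := by
  induction q generalizing r with
  | zero => simp
  | succ q ih =>
    calc f ((q + 1) * k + r) x = f (q * k + (k + r)) x := by rw [add_one_mul, add_assoc]
      _ ≤ ∑ i ∈ range q, f k (T^[i * k] x) + f (k + r) (T^[q * k] x) := ih (k + r)
      _ ≤ ∑ i ∈ range q, f k (T^[i * k] x) + (f k (T^[q * k] x) + f r (T^[k] (T^[q * k] x))) := by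
        gcongr; exact hsub k r _
      _ = ∑ i ∈ range (q + 1), f k (T^[i * k] x) + f r (T^[(q + 1) * k] x) := by
        rw [sum_range_succ, ← Function.iterate_add_apply, add_one_mul, add_comm k, add_assoc]

theorem le_sum_blocks_from_add (hsub : ∀ m n x, f (m + n) x ≤ f m x + f n (T^[m] x))
    (k : ℕ) {j n : ℕ} (hjn : j ≤ n) (x : X) :
    f n x ≤ ∑ i ∈ range ((n - j) / k), f k (T^[i * k + j] x) +
      (f (n - j - (n - j) / k * k) (T^[(n - j) / k * k + j] x) + f j x) := by
  have hblocks := le_sum_blocks_add hsub k ((n - j) / k) (n - j - (n - j) / k * k) (T^[j] x)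
  rw [Nat.add_sub_cancel' (Nat.div_mul_le_self _ _)] at hblocks
  simp only [← Function.iterate_add_apply] at hblocks
  calc f n x = f (j + (n - j)) x := by rw [Nat.add_sub_cancel' hjn]
    _ ≤ f j x + f (n - j) (T^[j] x) := hsub j (n - j) x
    _ ≤ _ := by linarith

end Subadditive

theorem subadditive_block_decomposition {X : Type*} (T : X → X) (f : ℕ → X → ℝ)
    (h0 : ∀ x, f 0 x = 0)
    (hsub : ∀ m n : ℕ, 1 ≤ m → 1 ≤ n → ∀ x, f (m + n) x ≤ f m x + f n (T^[m] x))
    (k n : ℕ) (hk : 1 ≤ k) (hn : 2 * k ≤ n) (x : X) :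
    f n x ≤
      (1 / (k : ℝ)) * ∑ s ∈ Finset.range (n - k + 1), f k (T^[s] x) +
      (1 / (k : ℝ)) * ∑ j ∈ Finset.range k,
        (f (n - j - ((n - j) / k) * k) (T^[((n - j) / k) * k + j] x) + f j x) := by
  have hsub₀ := le_add_comp_iterate_of_subadditive h0 hsub
  have hsum := sum_le_sum fun j (hj : j ∈ range k) ↦
    le_sum_blocks_from_add hsub₀ k (j := j) (n := n) (by rw [mem_range] at hj; omega) x
  rw [sum_const, card_range, nsmul_eq_mul, sum_add_distrib,
    sum_range_sum_range_div_mul_add (fun s ↦ f k (T^[s] x)) hk (by omega)] at hsum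
  rw [← mul_add, one_div_mul_eq_div, le_div_iff₀ (by positivity)]
  linarith
end

section
/- Let $X$ be a compact metric space, $T : X \to X$ continuous, and $(f_n)$ a sequence of continuous functions with $f_{n+m} \leq f_n + f_m \circ T^n$ pointwise. Let $(\nu_n)$ be Borel probability measures, $\mu_n = \frac1n \sum_{i=0}^{n-1} T^i_* \nu_n$, and suppose $\mu_{n_i} \to \mu$ weakly along a subsequence, with $\mu$ $T$-invariant. Then for every $k \geq 1$: $\limsup_{i\to\infty} \frac{1}{n_i}\int f_{n_i}\,d\nu_{n_i} \leq \frac{1}{k}\int f_k\,d\mu$. Consequently $\limsup_{i\to\infty} \frac{1}{n_i}\int f_{n_i}\,d\nu_{n_i} \leq \lim_{k\to\infty}\frac1k\int f_k\,d\mu$. -/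
open Filter MeasureTheory
open scoped ENNReal

/-!
Fix `k`. For each shift `s < k`, cutting `[0, n)` at `s + 1, s + 1 + k, …` and applying
subadditivity along the cuts bounds `f n` by a sum of `k`-blocks `f k ∘ T^m` plus boundary terms
`f m` with `m ≤ 3k`; averaging over the `k` shifts gives, pointwise,
`k f_n ≤ ∑_{m<n} f_k ∘ T^m + O(k)`. Integrating against `ν_n` turns the Birkhoff sum into
`n ∫ f_k dμ_n`, so `(1/n) ∫ f_n dν_n ≤ (1/k) ∫ f_k dμ_n + O(1/n)`, and weak convergence
`μ_{n_i} → μ` tested on the continuous `f_k` gives the bound; letting `k → ∞` gives the limit form.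
-/

theorem Finset.sum_range_mul_eq_sum_sum {M : Type*} [AddCommMonoid M] (g : ℕ → M) (q k : ℕ) :
    ∑ m ∈ range (q * k), g m = ∑ j ∈ range q, ∑ s ∈ range k, g (j * k + s) := by
  induction q with
  | zero => simp
  | succ q ih => rw [add_one_mul, sum_range_add, ih, sum_range_succ]

theorem sum_range_le_sum_range_add_mul {g : ℕ → ℝ} {B : ℝ} (hg : ∀ m, -B ≤ g m) (N r : ℕ) :
    ∑ m ∈ Finset.range N, g m ≤ ∑ m ∈ Finset.range (N + r), g m + r * B := by
  have htail := Finset.card_nsmul_le_sum (Finset.range r) (fun m => g (N + m)) (-B)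
    fun m _ => hg _
  rw [Finset.card_range, nsmul_eq_mul] at htail
  rw [Finset.sum_range_add]
  linarith

section Subadditive

variable {X : Type*} {T : X → X} {f : ℕ → X → ℝ}

theorem le_add_sum_iterate_of_subadditive
    (hsub : ∀ m n : ℕ, 1 ≤ m → 1 ≤ n → ∀ x, f (m + n) x ≤ f m x + f n (T^[m] x))
    {k s : ℕ} (hk : 1 ≤ k) (hs : 1 ≤ s) (x : X) (q : ℕ) :
    f (s + q * k) x ≤ f s x + ∑ j ∈ Finset.range q, f k (T^[s + j * k] x) := by
  induction q with
  | zero => simp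
  | succ q ih =>
    have := hsub (s + q * k) k (by omega) hk x
    rw [Finset.sum_range_succ, add_one_mul, ← add_assoc]
    linarith

/-- The blocks `s + 1 + j k` (`s < k`, `j < q`) cover every index of `[1, q k]` exactly once. -/
theorem mul_le_birkhoff_sum_add
    (hsub : ∀ m n : ℕ, 1 ≤ m → 1 ≤ n → ∀ x, f (m + n) x ≤ f m x + f n (T^[m] x))
    {k n : ℕ} (hk : 1 ≤ k) (hn : 2 * k ≤ n) {B : ℝ}
    (hB : ∀ m, 1 ≤ m → m ≤ 3 * k → ∀ x, |f m x| ≤ B) (x : X) :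
    k * f n x ≤ ∑ m ∈ Finset.range n, f k (T^[m] x) + 5 * k * B := by
  set q := n / k - 2
  have hq : q * k + 2 * k ≤ n ∧ n < q * k + 3 * k := by
    have h1 := Nat.div_mul_le_self n k
    have h2 := Nat.lt_div_mul_add (a := n) hk
    have h3 : 2 ≤ n / k := (Nat.le_div_iff_mul_le hk).2 (by omega)
    have h4 : q * k = n / k * k - 2 * k := Nat.sub_mul _ _ _
    omega
  have hupper : ∀ m, 1 ≤ m → m ≤ 3 * k → ∀ y, f m y ≤ B :=
    fun m h1 h2 y => (le_abs_self _).trans (hB m h1 h2 y)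
  have hlower : ∀ m, -B ≤ f k (T^[m] x) := fun m => neg_le_of_abs_le (hB k hk (by omega) _)
  set g : ℕ → ℝ := fun m => f k (T^[m + 1] x)
  have per_shift : ∀ s < k, f n x ≤ 2 * B + ∑ j ∈ Finset.range q, g (j * k + s) := by
    intro s hs
    have hsplit := hsub (s + 1 + q * k) (n - (s + 1 + q * k)) (by omega) (by omega) x
    rw [Nat.add_sub_cancel' (by omega)] at hsplit
    have hblocks := le_add_sum_iterate_of_subadditive hsub hk (Nat.le_add_left 1 s) x q
    have hhead := hupper (s + 1) (by omega) (by omega) x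
    have hrest := hupper (n - (s + 1 + q * k)) (by omega) (by omega) (T^[s + 1 + q * k] x)
    have hg : ∀ j, f k (T^[s + 1 + j * k] x) = g (j * k + s) := fun j => by
      simp only [g]; ring_nf
    simp only [hg] at hblocks
    linarith
  have htail : ∑ m ∈ Finset.range (q * k), g m ≤
      ∑ m ∈ Finset.range n, f k (T^[m] x) + 3 * k * B := by
    have h := sum_range_le_sum_range_add_mul hlower (q * k + 1) (n - (q * k + 1))
    rw [Finset.sum_range_succ', Nat.add_sub_cancel' (by omega)] at h
    have hr : ((n - (q * k + 1) : ℕ) : ℝ) + 1 ≤ 3 * k := by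
      exact_mod_cast (by omega : n - (q * k + 1) + 1 ≤ 3 * k)
    have hB0 : 0 ≤ B := (abs_nonneg _).trans (hB k hk (by omega) x)
    nlinarith [hlower 0]
  calc (k : ℝ) * f n x = ∑ _s ∈ Finset.range k, f n x := by simp
    _ ≤ ∑ s ∈ Finset.range k, (2 * B + ∑ j ∈ Finset.range q, g (j * k + s)) :=
      Finset.sum_le_sum fun s hs => per_shift s (Finset.mem_range.1 hs)
    _ = 2 * k * B + ∑ m ∈ Finset.range (q * k), g m := by
      rw [Finset.sum_add_distrib, Finset.sum_comm, Finset.sum_range_mul_eq_sum_sum]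
      simp only [Finset.sum_const, Finset.card_range, nsmul_eq_mul]
      ring
    _ ≤ _ := by linarith

end Subadditive

theorem exists_forall_abs_le_of_continuous {X : Type*} [TopologicalSpace X] [CompactSpace X]
    {f : ℕ → X → ℝ} (hf : ∀ n, Continuous (f n)) (N : ℕ) :
    ∃ B, ∀ m ≤ N, ∀ x, |f m x| ≤ B := by
  obtain ⟨B, hB⟩ := isCompact_univ.exists_bound_of_continuousOn
    (f := fun x => ∑ m ∈ Finset.range (N + 1), |f m x|) (by fun_prop)
  refine ⟨B, fun m hm x => ?_⟩
  calc |f m x| ≤ ∑ m ∈ Finset.range (N + 1), |f m x| :=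
        Finset.single_le_sum (f := fun m => |f m x|) (fun _ _ => abs_nonneg _)
          (Finset.mem_range.2 (by omega))
    _ ≤ B := (le_abs_self _).trans (hB x (Set.mem_univ x))

theorem Continuous.integrable_of_compactSpace {X : Type*} [TopologicalSpace X] [CompactSpace X]
    [MeasurableSpace X] [OpensMeasurableSpace X] {g : X → ℝ} (hg : Continuous g)
    (ν : Measure X) [IsFiniteMeasure ν] : Integrable g ν :=
  hg.integrable_of_hasCompactSupport (HasCompactSupport.of_compactSpace g)

section Measure

variable {X : Type*} [TopologicalSpace X] [CompactSpace X] [MeasurableSpace X] [BorelSpace X]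
  {T : X → X}

theorem integral_smul_sum_map_iterate (hT : Continuous T) (ν : Measure X) [IsFiniteMeasure ν]
    {g : X → ℝ} (hg : Continuous g) (n : ℕ) :
    ∫ x, g x ∂((n : ℝ≥0∞)⁻¹ • ∑ s ∈ Finset.range n, Measure.map (T^[s]) ν) =
      (n : ℝ)⁻¹ * ∑ s ∈ Finset.range n, ∫ x, g (T^[s] x) ∂ν := by
  rw [integral_smul_measure,
    integral_finsetSum_measure fun s _ => hg.integrable_of_compactSpace _]
  simp only [ENNReal.toReal_inv, ENNReal.toReal_natCast, smul_eq_mul]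
  congr 1
  exact Finset.sum_congr rfl fun s _ =>
    integral_map (hT.iterate s).aemeasurable (hg.integrable_of_compactSpace _).aestronglyMeasurable

theorem div_integral_le_div_integral_smul_sum_map_iterate_add (hT : Continuous T)
    {f : ℕ → X → ℝ} (hf : ∀ n, Continuous (f n))
    (hsub : ∀ m n : ℕ, 1 ≤ m → 1 ≤ n → ∀ x, f (m + n) x ≤ f m x + f n (T^[m] x))
    (ν : Measure X) [IsProbabilityMeasure ν] {k n : ℕ} (hk : 1 ≤ k) (hn : 2 * k ≤ n) {B : ℝ}
    (hB : ∀ m, 1 ≤ m → m ≤ 3 * k → ∀ x, |f m x| ≤ B) :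
    1 / (n : ℝ) * ∫ x, f n x ∂ν ≤
      1 / (k : ℝ) * ∫ x, f k x ∂((n : ℝ≥0∞)⁻¹ • ∑ s ∈ Finset.range n, Measure.map (T^[s]) ν) +
        5 * B / n := by
  have hint : ∀ s, Integrable (fun x => f k (T^[s] x)) ν :=
    fun s => ((hf k).comp (hT.iterate s)).integrable_of_compactSpace ν
  have hintegrated : k * ∫ x, f n x ∂ν ≤
      ∑ s ∈ Finset.range n, ∫ x, f k (T^[s] x) ∂ν + 5 * k * B := by
    calc k * ∫ x, f n x ∂ν = ∫ x, k * f n x ∂ν := (integral_const_mul _ _).symm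
      _ ≤ ∫ x, (∑ s ∈ Finset.range n, f k (T^[s] x) + 5 * k * B) ∂ν :=
        integral_mono (((hf n).integrable_of_compactSpace ν).const_mul _)
          ((integrable_finsetSum _ fun s _ => hint s).add (integrable_const _))
          fun x => mul_le_birkhoff_sum_add hsub hk hn hB x
      _ = _ := by
        rw [integral_add (integrable_finsetSum _ fun s _ => hint s) (integrable_const _),
          integral_finsetSum _ fun s _ => hint s, integral_const]
        simp
  have hk0 : (0 : ℝ) < k := by exact_mod_cast hk
  have hn0 : (0 : ℝ) < n := by exact_mod_cast (by omega : 0 < n)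
  rw [integral_smul_sum_map_iterate hT ν (hf k) n]
  calc 1 / (n : ℝ) * ∫ x, f n x ∂ν = (k * ∫ x, f n x ∂ν) / (k * n) := by field_simp
    _ ≤ (∑ s ∈ Finset.range n, ∫ x, f k (T^[s] x) ∂ν + 5 * k * B) / (k * n) := by gcongr
    _ = _ := by field_simp

end Measure

theorem limsup_integral_le_subadditive_limit_general {X : Type*} [MetricSpace X] [CompactSpace X]
    [MeasurableSpace X] [BorelSpace X]
    (T : X → X) (hT : Continuous T)
    (f : ℕ → X → ℝ) (hf : ∀ n, Continuous (f n))
    (hsub : ∀ m n : ℕ, 1 ≤ m → 1 ≤ n → ∀ x, f (m + n) x ≤ f m x + f n (T^[m] x))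
    (ν : ℕ → Measure X) (hν : ∀ n, IsProbabilityMeasure (ν n))
    (μ : Measure X)
    (φ : ℕ → ℕ) (hφ : StrictMono φ)
    (hconv : ∀ g : C(X, ℝ),
      Tendsto (fun i : ℕ =>
          ∫ x, g x ∂(((φ i : ℝ≥0∞))⁻¹ •
            ∑ s ∈ Finset.range (φ i), Measure.map (T^[s]) (ν (φ i))))
        atTop (nhds (∫ x, g x ∂μ))) :
    (∀ k : ℕ, 1 ≤ k →
      limsup (fun i : ℕ =>
          (((1 / (φ i : ℝ)) * ∫ x, f (φ i) x ∂(ν (φ i)) : ℝ) : EReal)) atTop ≤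
        (((1 / (k : ℝ)) * ∫ x, f k x ∂μ : ℝ) : EReal)) ∧
    ∀ L : EReal,
      Tendsto (fun k : ℕ => (((1 / (k : ℝ)) * ∫ x, f k x ∂μ : ℝ) : EReal)) atTop (nhds L) →
      limsup (fun i : ℕ =>
          (((1 / (φ i : ℝ)) * ∫ x, f (φ i) x ∂(ν (φ i)) : ℝ) : EReal)) atTop ≤ L := by
  have hfixed : ∀ k : ℕ, 1 ≤ k →
      limsup (fun i : ℕ =>
          (((1 / (φ i : ℝ)) * ∫ x, f (φ i) x ∂(ν (φ i)) : ℝ) : EReal)) atTop ≤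
        (((1 / (k : ℝ)) * ∫ x, f k x ∂μ : ℝ) : EReal) := by
    intro k hk
    obtain ⟨B, hB⟩ := exists_forall_abs_le_of_continuous hf (3 * k)
    have hle : ∀ᶠ i in atTop, (((1 / (φ i : ℝ)) * ∫ x, f (φ i) x ∂(ν (φ i)) : ℝ) : EReal) ≤
        ((1 / (k : ℝ) * ∫ x, f k x ∂(((φ i : ℝ≥0∞))⁻¹ •
            ∑ s ∈ Finset.range (φ i), Measure.map (T^[s]) (ν (φ i))) + 5 * B / φ i : ℝ) :
          EReal) := by
      filter_upwards [hφ.tendsto_atTop.eventually_ge_atTop (2 * k)] with i hi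
      have := hν (φ i)
      exact EReal.coe_le_coe_iff.2 <| div_integral_le_div_integral_smul_sum_map_iterate_add
        hT hf hsub (ν (φ i)) hk hi fun m _ hm => hB m hm
    have hlim := ((hconv ⟨f k, hf k⟩).const_mul (1 / (k : ℝ))).add
      (tendsto_const_nhds (x := 5 * B).div_atTop
        (tendsto_natCast_atTop_atTop.comp hφ.tendsto_atTop))
    rw [add_zero] at hlim
    exact (limsup_le_limsup hle).trans_eq (EReal.tendsto_coe.2 hlim).limsup_eq
  exact ⟨hfixed, fun L hL => ge_of_tendsto hL (eventually_atTop.2 ⟨1, hfixed⟩)⟩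

theorem limsup_integral_le_subadditive_limit {X : Type*} [MetricSpace X] [CompactSpace X]
    [MeasurableSpace X] [BorelSpace X]
    (T : X → X) (hT : Continuous T)
    (f : ℕ → X → ℝ) (hf : ∀ n, Continuous (f n))
    (hsub : ∀ m n : ℕ, 1 ≤ m → 1 ≤ n → ∀ x, f (m + n) x ≤ f m x + f n (T^[m] x))
    (ν : ℕ → Measure X) (hν : ∀ n, IsProbabilityMeasure (ν n))
    (μ : Measure X) [IsProbabilityMeasure μ] (hinv : Measure.map T μ = μ)
    (φ : ℕ → ℕ) (hφ : StrictMono φ)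
    (hconv : ∀ g : C(X, ℝ),
      Tendsto (fun i : ℕ =>
          ∫ x, g x ∂(((φ i : ℝ≥0∞))⁻¹ •
            ∑ s ∈ Finset.range (φ i), Measure.map (T^[s]) (ν (φ i))))
        atTop (nhds (∫ x, g x ∂μ))) :
    (∀ k : ℕ, 1 ≤ k →
      limsup (fun i : ℕ =>
          (((1 / (φ i : ℝ)) * ∫ x, f (φ i) x ∂(ν (φ i)) : ℝ) : EReal)) atTop ≤
        (((1 / (k : ℝ)) * ∫ x, f k x ∂μ : ℝ) : EReal)) ∧
    ∀ L : EReal,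
      Tendsto (fun k : ℕ => (((1 / (k : ℝ)) * ∫ x, f k x ∂μ : ℝ) : EReal)) atTop (nhds L) →
      limsup (fun i : ℕ =>
          (((1 / (φ i : ℝ)) * ∫ x, f (φ i) x ∂(ν (φ i)) : ℝ) : EReal)) atTop ≤ L :=
  limsup_integral_le_subadditive_limit_general T hT f hf hsub ν hν μ φ hφ hconv
end
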